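/- Let S ⊆ Y be a nonempty set of valid traces and r the binary reward indicator of S. For every θ ∈ ℝ^d, the inner product in ℝ^d of the REINFORCE gradient g_RL(θ) = Σ_{y ∈ Y} π(θ, y) · r(y) · ∇_θ log π(θ, y) with the SFT gradient on valid traces g_SFT(θ) = Σ_{y ∈ S} (π(θ, y) / P_θ(S)) · ∇_θ log π(θ, y) equals P_θ(S) · ‖g_SFT(θ)‖², and in particular this inner product is nonnegative (an SFT step on valid traces never opposes the REINFORCE direction). -/

import Mathlib

/-!
Since `π • ∇log π = ∇π`, both gradients are multiples of `G = ∑_{y ∈ S} ∇π(θ, y)`: the binary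
reward makes `g_RL = G`, while `g_SFT = P_θ(S)⁻¹ • G`. Hence `g_RL = P_θ(S) • g_SFT`, and
`⟪g_RL, g_SFT⟫ = P_θ(S) ‖g_SFT‖²` with `P_θ(S) > 0`.
-/

section ScoreFunction

variable {ι 𝕜 E : Type*} [Field 𝕜] [AddCommGroup E] [Module 𝕜 E]

theorem mul_smul_inv_smul {p : 𝕜} (hp : p ≠ 0) (c : 𝕜) (v : E) :
    (p * c) • (p⁻¹ • v) = c • v := by
  rw [smul_smul, mul_right_comm, mul_inv_cancel₀ hp, one_mul]

variable {s : Finset ι} {p : ι → 𝕜}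

theorem sum_div_sum_smul_inv_smul (hp : ∀ i ∈ s, p i ≠ 0) (g : ι → E) :
    ∑ i ∈ s, (p i / ∑ j ∈ s, p j) • ((p i)⁻¹ • g i) = (∑ j ∈ s, p j)⁻¹ • ∑ i ∈ s, g i := by
  rw [Finset.smul_sum]
  refine Finset.sum_congr rfl fun i hi => ?_
  rw [div_eq_mul_inv, mul_smul_inv_smul (hp i hi)]

variable [Fintype ι] [DecidableEq ι]

theorem sum_mul_indicator_smul_inv_smul (hp : ∀ i ∈ s, p i ≠ 0) (g : ι → E) :
    ∑ i, (p i * if i ∈ s then 1 else 0) • ((p i)⁻¹ • g i) = ∑ i ∈ s, g i := by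
  rw [← Finset.sum_subset (Finset.subset_univ s)]
  · refine Finset.sum_congr rfl fun i hi => ?_
    rw [if_pos hi, mul_smul_inv_smul (hp i hi), one_smul]
  · intro i _ hi
    rw [if_neg hi, mul_zero, zero_smul]

end ScoreFunction

theorem sft_reinforce_inner_nonneg_general
    (d : ℕ) (Y : Type*) [Fintype Y] [DecidableEq Y]
    (pol : EuclideanSpace ℝ (Fin d) → Y → ℝ)
    (hpos : ∀ θ y, 0 < pol θ y)
    (S : Finset Y) (hS : S.Nonempty)
    (r : Y → ℝ) (hr : ∀ y, r y = if y ∈ S then 1 else 0)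
    (θ : EuclideanSpace ℝ (Fin d))
    (gRL gSFT : EuclideanSpace ℝ (Fin d))
    (hgRL : gRL = ∑ y, (pol θ y * r y) •
        ((pol θ y)⁻¹ • gradient (fun θ' => pol θ' y) θ))
    (hgSFT : gSFT = ∑ y ∈ S, (pol θ y / ∑ y' ∈ S, pol θ y') •
        ((pol θ y)⁻¹ • gradient (fun θ' => pol θ' y) θ)) :
    (inner ℝ gRL gSFT : ℝ) = (∑ y ∈ S, pol θ y) * ‖gSFT‖ ^ 2 ∧
      0 ≤ (inner ℝ gRL gSFT : ℝ) := by
  set P := ∑ y ∈ S, pol θ y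
  have hP : 0 < P := Finset.sum_pos (fun y _ => hpos θ y) hS
  have hne : ∀ y ∈ S, pol θ y ≠ 0 := fun y _ => (hpos θ y).ne'
  have hRL_eq : gRL = P • gSFT := by
    simp only [hr] at hgRL
    rw [hgRL, hgSFT, sum_mul_indicator_smul_inv_smul hne, sum_div_sum_smul_inv_smul hne,
      smul_inv_smul₀ hP.ne']
  have hinner : (inner ℝ gRL gSFT : ℝ) = P * ‖gSFT‖ ^ 2 := by
    rw [hRL_eq, real_inner_smul_left, real_inner_self_eq_norm_sq]
  exact ⟨hinner, hinner ▸ by positivity⟩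

/-- The inner product of the REINFORCE gradient (binary reward) with the SFT
gradient on valid traces equals `P_θ(S) · ‖g_SFT(θ)‖²`, and in particular is
nonnegative: an SFT step on valid traces never opposes the REINFORCE
direction. -/
theorem sft_reinforce_inner_nonneg
    (d : ℕ) (Y : Type*) [Fintype Y] [Nonempty Y] [DecidableEq Y]
    (pol : EuclideanSpace ℝ (Fin d) → Y → ℝ)
    (hpos : ∀ θ y, 0 < pol θ y)
    (hsum : ∀ θ, ∑ y, pol θ y = 1)
    (hdiff : ∀ y, Differentiable ℝ (fun θ => pol θ y))
    (S : Finset Y) (hS : S.Nonempty)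
    (r : Y → ℝ) (hr : ∀ y, r y = if y ∈ S then 1 else 0)
    (θ : EuclideanSpace ℝ (Fin d))
    (gRL gSFT : EuclideanSpace ℝ (Fin d))
    (hgRL : gRL = ∑ y, (pol θ y * r y) •
        ((pol θ y)⁻¹ • gradient (fun θ' => pol θ' y) θ))
    (hgSFT : gSFT = ∑ y ∈ S, (pol θ y / ∑ y' ∈ S, pol θ y') •
        ((pol θ y)⁻¹ • gradient (fun θ' => pol θ' y) θ)) :
    (inner ℝ gRL gSFT : ℝ) = (∑ y ∈ S, pol θ y) * ‖gSFT‖ ^ 2 ∧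
      0 ≤ (inner ℝ gRL gSFT : ℝ) :=
  sft_reinforce_inner_nonneg_general d Y pol hpos S hS r hr θ gRL gSFT hgRL hgSFT
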